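/- arXiv:1011.6584 — 3 statements merged into one kernel-verified Lean document; each statement's English description precedes it below -/
import Mathlib

section
/- Let H be an infinite-dimensional separable complex Hilbert space and let A be a bounded linear operator on H belonging to the class C₋(H). Then: (i) A is a complex skew-symmetric operator with a simple spectrum; and (ii) there exist a conjugation J on H with JAJ = −A* and a cyclic vector x₀ of A with Jx₀ = x₀ such that Γ(x₀, Ax₀, …, Aⁿx₀, (A*)ⁿx₀) = 0 for every n ≥ 1. -/
/-!
Let `e` be the basis in which `A` has a matrix in `M₃⁻`, and let `J` conjugate the
coordinates in `e`. Against a basis that `J` fixes, `JAJ = -A*` says exactly that the matrix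
of `A` is skew-symmetric. As the matrix is tridiagonal with nonzero off-diagonal entries,
`A e_l` is a nonzero multiple of `e_{l+1}` modulo `e_0, …, e_l`, so `e_0` is cyclic. Finally
`Aⁱ e_0` and `(A*)ⁱ e_0` lie in `span (e_0, …, e_i)`, so the `n + 2` vectors
`e_0, A e_0, …, Aⁿ e_0, (A*)ⁿ e_0` lie in a space of dimension `n + 1`, and their Gram
determinant vanishes.
-/

open scoped ComplexConjugate

noncomputable section

variable {H : Type*} [NormedAddCommGroup H] [InnerProductSpace ℂ H]

/-- A conjugation on a complex Hilbert space `H`: an antilinear involution that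
reverses the inner product (Mathlib's inner product is linear in the second argument,
so the paper's `(Jx, Jy) = (y, x)` becomes `⟪Jx, Jy⟫ = ⟪y, x⟫`). -/
def IsConjugation (J : H → H) : Prop :=
  (∀ x y : H, J (x + y) = J x + J y) ∧
  (∀ (c : ℂ) (x : H), J (c • x) = conj c • J x) ∧
  (∀ x : H, J (J x) = x) ∧
  (∀ x y : H, (inner ℂ (J x) (J y) : ℂ) = inner ℂ y x)

/-- `x₀` is a cyclic vector for `A`: the span of the orbit `{Aᵏx₀}` is dense. -/
def IsCyclicVector (A : H →L[ℂ] H) (x₀ : H) : Prop :=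
  Dense ((Submodule.span ℂ (Set.range fun k : ℕ => (A ^ k) x₀) : Submodule ℂ H) : Set H)

/-- The Gram determinant `Γ(y₀,…,y_{n-1}) = det((y_k, y_l))`, where the paper's
inner product `(y_k, y_l)` (linear in the first argument) is `⟪y_l, y_k⟫` in Mathlib. -/
def gramDet {n : ℕ} (y : Fin n → H) : ℂ :=
  Matrix.det (Matrix.of fun k l : Fin n => (inner ℂ (y l) (y k) : ℂ))

/-- The condition `Γ(x₀, Ax₀, …, Aⁿx₀, (A*)ⁿx₀) = 0` for every `n ≥ 1`. -/
def GammaVanish [CompleteSpace H] (A : H →L[ℂ] H) (x₀ : H) : Prop :=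
  ∀ n : ℕ, 1 ≤ n →
    gramDet (Fin.snoc (fun i : Fin (n + 1) => (A ^ (i : ℕ)) x₀)
      ((ContinuousLinearMap.adjoint A ^ n) x₀)) = 0

/-- The class `M₃⁺` of semi-infinite complex matrices. -/
def MemM3plus (m : ℕ → ℕ → ℂ) : Prop :=
  (∀ k l : ℕ, 1 < |(k : ℤ) - (l : ℤ)| → m k l = 0) ∧
  (∀ k l : ℕ, m k l = m l k) ∧
  (∀ k : ℕ, m k (k + 1) ≠ 0)

/-- The class `M₃⁻` of semi-infinite complex matrices. -/
def MemM3minus (m : ℕ → ℕ → ℂ) : Prop :=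
  (∀ k l : ℕ, 1 < |(k : ℤ) - (l : ℤ)| → m k l = 0) ∧
  (∀ k l : ℕ, m k l = - m l k) ∧
  (∀ k : ℕ, m k (k + 1) ≠ 0)

/-- The matrix of `A` in the orthonormal basis `e`: the paper's
`m_{k,l} = (Ae_l, e_k)` is `⟪e_k, Ae_l⟫` in Mathlib's convention. -/
def matrixIn (A : H →L[ℂ] H) (e : HilbertBasis ℕ ℂ H) : ℕ → ℕ → ℂ :=
  fun k l => (inner ℂ (e k) (A (e l)) : ℂ)

/-- The class `C₊(H)`. -/
def MemCplus (A : H →L[ℂ] H) : Prop :=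
  ∃ e : HilbertBasis ℕ ℂ H, MemM3plus (matrixIn A e)

/-- The class `C₋(H)`. -/
def MemCminus (A : H →L[ℂ] H) : Prop :=
  ∃ e : HilbertBasis ℕ ℂ H, MemM3minus (matrixIn A e)

open scoped InnerProductSpace

theorem HilbertBasis.ext_inner_left {ι 𝕜 E : Type*} [RCLike 𝕜] [NormedAddCommGroup E]
    [InnerProductSpace 𝕜 E] (b : HilbertBasis ι 𝕜 E) {x y : E}
    (h : ∀ i, ⟪b i, x⟫_𝕜 = ⟪b i, y⟫_𝕜) : x = y :=
  b.repr.injective <| lp.ext <| funext fun i => by simpa only [b.repr_apply_apply] using h i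

theorem gramDet_eq_zero_iff {n : ℕ} (y : Fin n → H) :
    gramDet y = 0 ↔ ¬ LinearIndependent ℂ y := by
  rw [← Matrix.det_gram_ne_zero_iff_linearIndependent, not_not, gramDet, ← Matrix.det_transpose]
  rfl

theorem not_linearIndependent_of_finrank_lt {ι R M : Type*} [Fintype ι] [Ring R] [Nontrivial R]
    [StrongRankCondition R] [AddCommGroup M] [Module R M] {y : ι → M} {W : Submodule R M}
    [Module.Finite R W] (hy : ∀ i, y i ∈ W) (hW : Module.finrank R W < Fintype.card ι) :
    ¬ LinearIndependent R y := fun hli => by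
  have := Submodule.finrank_mono (Submodule.span_le.2 (Set.range_subset_iff.2 hy))
  rw [finrank_span_eq_card hli] at this
  omega

theorem apply_mem_span_orbit (A : H →L[ℂ] H) (x : H) {v : H}
    (hv : v ∈ Submodule.span ℂ (Set.range fun k : ℕ => (A ^ k) x)) :
    A v ∈ Submodule.span ℂ (Set.range fun k : ℕ => (A ^ k) x) := by
  have hmap : (Submodule.span ℂ (Set.range fun k : ℕ => (A ^ k) x)).map (A : H →ₗ[ℂ] H) ≤
      Submodule.span ℂ (Set.range fun k : ℕ => (A ^ k) x) := by
    rw [Submodule.map_span]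
    refine Submodule.span_mono ?_
    rintro _ ⟨_, ⟨k, rfl⟩, rfl⟩
    exact ⟨k + 1, show (A ^ (k + 1)) x = A ((A ^ k) x) by rw [pow_succ']; rfl⟩
  exact hmap (Submodule.mem_map_of_mem hv)

namespace HilbertBasis

section Conjugation

variable {ι : Type*}

def conjugation (e : HilbertBasis ι ℂ H) (x : H) : H :=
  e.repr.symm (star (e.repr x))

variable (e : HilbertBasis ι ℂ H)

theorem inner_conjugation (i : ι) (x : H) : ⟪e i, e.conjugation x⟫_ℂ = conj ⟪e i, x⟫_ℂ := by
  rw [← e.repr_apply_apply, conjugation, e.repr.apply_symm_apply, lp.star_apply,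
    e.repr_apply_apply]
  rfl

theorem conjugation_apply_self (i : ι) : e.conjugation (e i) = e i := by
  classical
  refine e.ext_inner_left fun j => ?_
  rw [inner_conjugation, orthonormal_iff_ite.mp e.orthonormal]
  split_ifs <;> simp

theorem isConjugation_conjugation : IsConjugation e.conjugation := by
  refine ⟨fun x y => ?_, fun c x => ?_, fun x => ?_, fun x y => ?_⟩
  · simp only [conjugation, map_add, star_add]
  · simp only [conjugation, map_smul, star_smul]
    rfl
  · simp only [conjugation, e.repr.apply_symm_apply, star_star, e.repr.symm_apply_apply]
  · rw [← e.tsum_inner_mul_inner, ← e.tsum_inner_mul_inner]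
    congr 1 with i
    rw [← inner_conj_symm (e.conjugation x), inner_conjugation, inner_conjugation,
      Complex.conj_conj, ← inner_conj_symm y, mul_comm]

end Conjugation

end HilbertBasis

theorem IsConjugation.inner_apply_right {J : H → H} (hJ : IsConjugation J) (u v : H) :
    ⟪u, J v⟫_ℂ = conj ⟪J u, v⟫_ℂ :=
  calc ⟪u, J v⟫_ℂ = ⟪J (J u), J v⟫_ℂ := by rw [hJ.2.2.1]
    _ = ⟪v, J u⟫_ℂ := hJ.2.2.2 _ _
    _ = conj ⟪J u, v⟫_ℂ := (inner_conj_symm v (J u)).symm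

section Adjoint

variable [CompleteSpace H]

theorem matrixIn_adjoint (e : HilbertBasis ℕ ℂ H) (A : H →L[ℂ] H) (k l : ℕ) :
    matrixIn (ContinuousLinearMap.adjoint A) e k l = conj (matrixIn A e l k) := by
  rw [matrixIn, matrixIn, ContinuousLinearMap.adjoint_inner_right, inner_conj_symm]

theorem IsConjugation.apply_apply_eq_neg_adjoint {J : H → H} (hJ : IsConjugation J)
    {e : HilbertBasis ℕ ℂ H} (hJe : ∀ k, J (e k) = e k) {A : H →L[ℂ] H}
    (hskew : ∀ k l, matrixIn A e k l = - matrixIn A e l k) (x : H) :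
    J (A (J x)) = - ContinuousLinearMap.adjoint A x := by
  have inner_basis_apply (k : ℕ) (v : H) : ⟪e k, J v⟫_ℂ = conj ⟪e k, v⟫_ℂ := by
    rw [hJ.inner_apply_right, hJe]
  have hAdj (k : ℕ) : J (ContinuousLinearMap.adjoint A (e k)) = - A (e k) := by
    refine e.ext_inner_left fun j => ?_
    rw [inner_basis_apply, inner_neg_right]
    change conj (matrixIn (ContinuousLinearMap.adjoint A) e j k) = - matrixIn A e j k
    rw [matrixIn_adjoint, Complex.conj_conj, hskew]
  refine e.ext_inner_left fun k => ?_
  rw [inner_basis_apply, ← ContinuousLinearMap.adjoint_inner_left, hJ.inner_apply_right,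
    Complex.conj_conj, hAdj, inner_neg_left, inner_neg_right,
    ContinuousLinearMap.adjoint_inner_right]

end Adjoint

section Hessenberg

variable (e : HilbertBasis ℕ ℂ H)

def basisSpan (n : ℕ) : Submodule ℂ H :=
  Submodule.span ℂ (Set.range fun i : Fin (n + 1) => e i)

theorem basis_mem_basisSpan {j n : ℕ} (h : j ≤ n) : e j ∈ basisSpan e n :=
  Submodule.subset_span ⟨⟨j, by omega⟩, rfl⟩

theorem basisSpan_mono {m n : ℕ} (h : m ≤ n) : basisSpan e m ≤ basisSpan e n :=
  Submodule.span_le.2 <| Set.range_subset_iff.2 fun i => basis_mem_basisSpan e (by omega)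

instance finiteDimensional_basisSpan (n : ℕ) : FiniteDimensional ℂ (basisSpan e n) :=
  FiniteDimensional.span_of_finite ℂ (Set.finite_range _)

theorem finrank_basisSpan_le (n : ℕ) : Module.finrank ℂ (basisSpan e n) ≤ n + 1 :=
  (finrank_range_le_card _).trans (Fintype.card_fin _).le

variable {e} {B : H →L[ℂ] H}

theorem apply_basis_eq_sum_of_hessenberg (hB : ∀ k l, l + 1 < k → matrixIn B e k l = 0)
    (l : ℕ) : B (e l) = ∑ j ∈ Finset.range (l + 2), matrixIn B e j l • e j := by
  have h := e.hasSum_repr (B (e l))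
  simp only [e.repr_apply_apply] at h
  refine h.unique (hasSum_sum_of_ne_finset_zero fun j hj => ?_)
  rw [Finset.mem_range, not_lt] at hj
  exact (congrArg (· • e j) (hB j l (by omega))).trans (zero_smul ℂ _)

theorem apply_basis_mem_basisSpan (hB : ∀ k l, l + 1 < k → matrixIn B e k l = 0) (l : ℕ) :
    B (e l) ∈ basisSpan e (l + 1) := by
  rw [apply_basis_eq_sum_of_hessenberg hB l]
  refine Submodule.sum_mem _ fun j hj => Submodule.smul_mem _ _ (basis_mem_basisSpan e ?_)
  rw [Finset.mem_range] at hj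
  omega

theorem pow_apply_basis_zero_mem_basisSpan (hB : ∀ k l, l + 1 < k → matrixIn B e k l = 0)
    (i : ℕ) : (B ^ i) (e 0) ∈ basisSpan e i := by
  induction i with
  | zero => exact basis_mem_basisSpan e le_rfl
  | succ i ih =>
    have hmaps : basisSpan e i ≤ (basisSpan e (i + 1)).comap (B : H →ₗ[ℂ] H) :=
      Submodule.span_le.2 <| Set.range_subset_iff.2 fun j =>
        basisSpan_mono e (by omega) (apply_basis_mem_basisSpan hB j)
    rw [pow_succ']
    exact hmaps ih

theorem isCyclicVector_basis_zero (hB : ∀ k l, l + 1 < k → matrixIn B e k l = 0)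
    (hsub : ∀ l, matrixIn B e (l + 1) l ≠ 0) : IsCyclicVector B (e 0) := by
  set S := Submodule.span ℂ (Set.range fun k : ℕ => (B ^ k) (e 0))
  have hbasis (n : ℕ) : e n ∈ S := by
    induction n using Nat.strong_induction_on with
    | _ n ih =>
      rcases n with _ | l
      · exact Submodule.subset_span ⟨0, by simp⟩
      · have hl := apply_basis_eq_sum_of_hessenberg hB l
        rw [Finset.sum_range_succ] at hl
        have hsolve : e (l + 1) = (matrixIn B e (l + 1) l)⁻¹ •
            (B (e l) - ∑ j ∈ Finset.range (l + 1), matrixIn B e j l • e j) := by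
          rw [hl, add_sub_cancel_left, smul_smul, inv_mul_cancel₀ (hsub l), one_smul]
        rw [hsolve]
        refine S.smul_mem _ (S.sub_mem (apply_mem_span_orbit B _ (ih l (by omega)))
          (S.sum_mem fun j hj => S.smul_mem _ (ih j ?_)))
        rw [Finset.mem_range] at hj
        omega
  have hle : Submodule.span ℂ (Set.range e) ≤ S :=
    Submodule.span_le.2 (Set.range_subset_iff.2 hbasis)
  refine Submodule.dense_iff_topologicalClosure_eq_top.2 (eq_top_iff.2 ?_)
  exact e.dense_span ▸ Submodule.topologicalClosure_mono hle

theorem gammaVanish_basis_zero [CompleteSpace H] {A : H →L[ℂ] H}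
    (hband : ∀ k l : ℕ, 1 < |(k : ℤ) - (l : ℤ)| → matrixIn A e k l = 0) :
    GammaVanish A (e 0) := by
  have hA (k l : ℕ) (h : l + 1 < k) : matrixIn A e k l = 0 := hband k l (by rw [lt_abs]; omega)
  have hA' (k l : ℕ) (h : l + 1 < k) : matrixIn (ContinuousLinearMap.adjoint A) e k l = 0 := by
    rw [matrixIn_adjoint, hband l k (by rw [lt_abs]; omega), map_zero]
  intro n _
  rw [gramDet_eq_zero_iff]
  refine not_linearIndependent_of_finrank_lt (W := basisSpan e n) (fun i => ?_) ?_
  · induction i using Fin.lastCases with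
    | last => rw [Fin.snoc_last]; exact pow_apply_basis_zero_mem_basisSpan hA' n
    | cast i =>
      rw [Fin.snoc_castSucc]
      exact basisSpan_mono e (by omega) (pow_apply_basis_zero_mem_basisSpan hA i)
  · rw [Fintype.card_fin]
    exact (finrank_basisSpan_le e n).trans_lt (by omega)

end Hessenberg

theorem statement2_general {H : Type*} [NormedAddCommGroup H] [InnerProductSpace ℂ H]
    [CompleteSpace H]
    (A : H →L[ℂ] H) (hA : MemCminus A) :
    ((∃ J : H → H, IsConjugation J ∧
        ∀ x : H, J (A (J x)) = - ContinuousLinearMap.adjoint A x) ∧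
      (∃ x₀ : H, IsCyclicVector A x₀)) ∧
    (∃ (J : H → H) (x₀ : H), IsConjugation J ∧
      (∀ x : H, J (A (J x)) = - ContinuousLinearMap.adjoint A x) ∧
      IsCyclicVector A x₀ ∧ J x₀ = x₀ ∧ GammaVanish A x₀) := by
  obtain ⟨e, hband, hskew, hsuper⟩ := hA
  have hJ := e.isConjugation_conjugation
  have hJAJ := hJ.apply_apply_eq_neg_adjoint e.conjugation_apply_self hskew
  have hcyc : IsCyclicVector A (e 0) :=
    isCyclicVector_basis_zero (fun k l h => hband k l (by rw [lt_abs]; omega))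
      fun l => by rw [hskew]; exact neg_ne_zero.2 (hsuper l)
  exact ⟨⟨⟨_, hJ, hJAJ⟩, ⟨_, hcyc⟩⟩,
    ⟨_, _, hJ, hJAJ, hcyc, e.conjugation_apply_self 0, gammaVanish_basis_zero hband⟩⟩

/-- If `A ∈ C₋(H)` then `A` is complex skew-symmetric with a simple spectrum,
and there are a conjugation `J` with `JAJ = −A*` and a cyclic vector `x₀` with `Jx₀ = x₀`
such that `Γ(x₀, Ax₀, …, Aⁿx₀, (A*)ⁿx₀) = 0` for all `n ≥ 1`. -/
theorem statement2 {H : Type*} [NormedAddCommGroup H] [InnerProductSpace ℂ H]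
    [CompleteSpace H] [TopologicalSpace.SeparableSpace H]
    (hinf : ¬ FiniteDimensional ℂ H)
    (A : H →L[ℂ] H) (hA : MemCminus A) :
    ((∃ J : H → H, IsConjugation J ∧
        ∀ x : H, J (A (J x)) = - ContinuousLinearMap.adjoint A x) ∧
      (∃ x₀ : H, IsCyclicVector A x₀)) ∧
    (∃ (J : H → H) (x₀ : H), IsConjugation J ∧
      (∀ x : H, J (A (J x)) = - ContinuousLinearMap.adjoint A x) ∧
      IsCyclicVector A x₀ ∧ J x₀ = x₀ ∧ GammaVanish A x₀) :=
  statement2_general A hA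
end
end

section
/- Let H be an infinite-dimensional separable complex Hilbert space and let A be a bounded linear operator on H. Suppose there exist a conjugation J on H with JAJ = −A* and a cyclic vector x₀ of A with Jx₀ = x₀ such that Γ(x₀, Ax₀, …, Aⁿx₀, (A*)ⁿx₀) = 0 for every n ≥ 1. Then A belongs to the class C₋(H). -/
open scoped ComplexConjugate

noncomputable section

variable {H : Type*} [NormedAddCommGroup H] [InnerProductSpace ℂ H]

/-!
Because `x₀` is cyclic and `H` is infinite-dimensional, the Krylov spaces
`Kₙ = span {x₀, Ax₀, …, Aⁿ⁻¹x₀}` form a strictly increasing flag with dense union. The vanishing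
of `Γ(x₀, …, Aⁿx₀, (A*)ⁿx₀)` says `(A*)ⁿx₀ ∈ Kₙ₊₁`, and `J Aᵏx₀ = (-1)ᵏ (A*)ᵏx₀`, so `J` preserves
every `Kₙ` and hence every line `Kₙ₊₁ ⊖ Kₙ`. Rotating the Gram–Schmidt vectors of `(Aᵏx₀)` by
phases therefore gives an orthonormal basis `(eₖ)` fixed by `J`. As for any orthonormalised
Krylov flag, the matrix of `A` in it is Hessenberg with nonzero subdiagonal, and
`JAJ = -A*` together with `J eₖ = eₖ` makes it antisymmetric, hence tridiagonal.
-/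

open Set Submodule InnerProductSpace
open ContinuousLinearMap (adjoint adjoint_inner_left)

theorem linearIndependent_of_notMem_span_image_Iio {K V : Type*} [DivisionRing K]
    [AddCommGroup V] [Module K V] {v : ℕ → V} (h : ∀ n, v n ∉ span K (v '' Iio n)) :
    LinearIndependent K v := by
  have hIio : ∀ n, LinearIndepOn K v (Iio n) := by
    intro n
    induction n with
    | zero => simp
    | succ n ih =>
      rw [Iio_add_one_eq_Iic, ← Iio_insert, linearIndepOn_insert self_notMem_Iio]
      exact ⟨ih, h n⟩
  rw [← linearIndepOn_univ_iff, ← iUnion_Iio]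
  exact linearIndepOn_iUnion_of_directed (Monotone.directed_le fun _ _ => Iio_subset_Iio) hIio

theorem span_image_smul_of_ne_zero {K V ι : Type*} [DivisionRing K] [AddCommGroup V]
    [Module K V] {v : ι → V} {μ : ι → K} (hμ : ∀ i, μ i ≠ 0) (s : Set ι) :
    span K ((fun i => μ i • v i) '' s) = span K (v '' s) := by
  apply le_antisymm <;> rw [span_le] <;> rintro _ ⟨i, hi, rfl⟩
  · exact smul_mem _ _ (subset_span (mem_image_of_mem v hi))
  · rw [← inv_smul_smul₀ (hμ i) (v i)]
    exact smul_mem _ _ (subset_span (mem_image_of_mem (fun i => μ i • v i) hi))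

section Orthonormal

variable {𝕜 E ι : Type*} [RCLike 𝕜] [NormedAddCommGroup E] [InnerProductSpace 𝕜 E]

theorem Orthonormal.smul_of_norm_eq_one {e : ι → E} (he : Orthonormal 𝕜 e) {μ : ι → 𝕜}
    (hμ : ∀ i, ‖μ i‖ = 1) : Orthonormal 𝕜 fun i => μ i • e i := by
  refine ⟨fun i => by rw [norm_smul, hμ, he.norm_eq_one, one_mul], fun i j hij => ?_⟩
  dsimp only
  rw [inner_smul_left, inner_smul_right, he.inner_eq_zero hij, mul_zero, mul_zero]

theorem Orthonormal.mem_orthogonal_span_image {e : ι → E} (he : Orthonormal 𝕜 e) {s : Set ι}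
    {i : ι} (hi : i ∉ s) : e i ∈ (span 𝕜 (e '' s))ᗮ := by
  refine (isOrtho_span.mpr ?_).ge (mem_span_singleton_self (e i))
  rintro _ ⟨j, hj, rfl⟩ _ rfl
  exact he.inner_eq_zero (ne_of_mem_of_not_mem hj hi)

theorem Orthonormal.span_image_Iio_succ_inf_orthogonal {e : ℕ → E} (he : Orthonormal 𝕜 e)
    (n : ℕ) : span 𝕜 (e '' Iio (n + 1)) ⊓ (span 𝕜 (e '' Iio n))ᗮ = 𝕜 ∙ e n := by
  have hperp : 𝕜 ∙ e n ≤ (span 𝕜 (e '' Iio n))ᗮ :=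
    (span_singleton_le_iff_mem _ _).mpr (he.mem_orthogonal_span_image self_notMem_Iio)
  rw [Iio_add_one_eq_Iic, ← Iio_insert, image_insert_eq, span_insert, sup_inf_assoc_of_le _ hperp,
    inf_orthogonal_eq_bot, sup_bot_eq]

end Orthonormal

def krylov (A : H →L[ℂ] H) (x : H) (n : ℕ) : Submodule ℂ H :=
  span ℂ ((fun k => (A ^ k) x) '' Iio n)

section Krylov

variable (A : H →L[ℂ] H) (x : H)

instance (n : ℕ) : FiniteDimensional ℂ (krylov A x n) :=
  FiniteDimensional.span_of_finite ℂ ((finite_Iio n).image _)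

theorem krylov_mono : Monotone (krylov A x) :=
  fun _ _ h => span_mono (image_mono (Iio_subset_Iio h))

theorem pow_apply_mem_krylov {k n : ℕ} (h : k < n) : (A ^ k) x ∈ krylov A x n :=
  subset_span ⟨k, h, rfl⟩

theorem apply_mem_krylov_succ {n : ℕ} {y : H} (hy : y ∈ krylov A x n) :
    A y ∈ krylov A x (n + 1) := by
  refine (span_le (p := (krylov A x (n + 1)).comap (A : H →ₗ[ℂ] H))).mpr ?_ hy
  rintro _ ⟨k, hk, rfl⟩
  show A ((A ^ k) x) ∈ krylov A x (n + 1)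
  rw [← mul_apply_eq_comp, ← pow_succ']
  exact pow_apply_mem_krylov A x (Nat.succ_lt_succ hk)

theorem krylov_eq_top_of_pow_apply_mem (hcyc : IsCyclicVector A x) {n : ℕ}
    (h : (A ^ n) x ∈ krylov A x n) : krylov A x n = ⊤ := by
  have hsucc : krylov A x (n + 1) = krylov A x n := by
    refine le_antisymm (span_le.mpr ?_) (krylov_mono A x n.le_succ)
    rintro _ ⟨k, hk, rfl⟩
    rcases (Nat.lt_succ_iff.mp hk).lt_or_eq with hk | rfl
    exacts [pow_apply_mem_krylov A x hk, h]
  have hall : ∀ m, (A ^ m) x ∈ krylov A x n := by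
    intro m
    induction m with
    | zero =>
      rcases n.eq_zero_or_pos with rfl | hn
      exacts [h, pow_apply_mem_krylov A x hn]
    | succ m ih =>
      rw [pow_succ', mul_apply_eq_comp, ← hsucc]
      exact apply_mem_krylov_succ A x ih
  have hclosure : closure (span ℂ (range fun k => (A ^ k) x) : Set H) ⊆ krylov A x n :=
    closure_minimal (span_le.mpr (range_subset_iff.mpr hall))
      (krylov A x n).closed_of_finiteDimensional
  exact eq_top_iff.mpr fun y _ => hclosure (hcyc y)

theorem pow_apply_notMem_krylov (hinf : ¬ FiniteDimensional ℂ H) (hcyc : IsCyclicVector A x)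
    (n : ℕ) : (A ^ n) x ∉ krylov A x n := by
  intro h
  have hfin : FiniteDimensional ℂ (krylov A x n) := inferInstance
  rw [krylov_eq_top_of_pow_apply_mem A x hcyc h] at hfin
  exact hinf topEquiv.finiteDimensional

theorem linearIndependent_pow_apply (hinf : ¬ FiniteDimensional ℂ H)
    (hcyc : IsCyclicVector A x) : LinearIndependent ℂ fun k => (A ^ k) x :=
  linearIndependent_of_notMem_span_image_Iio (pow_apply_notMem_krylov A x hinf hcyc)

end Krylov

section Conjugation

variable {J : H → H}

theorem IsConjugation.apply_smul (hJ : IsConjugation J) (c : ℂ) (x : H) :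
    J (c • x) = conj c • J x :=
  hJ.2.1 c x

theorem IsConjugation.apply_apply (hJ : IsConjugation J) (x : H) : J (J x) = x :=
  hJ.2.2.1 x

theorem IsConjugation.inner_map_map (hJ : IsConjugation J) (x y : H) :
    ⟪J x, J y⟫_ℂ = ⟪y, x⟫_ℂ :=
  hJ.2.2.2 x y

def IsConjugation.toLinearMap (hJ : IsConjugation J) : H →ₗ⋆[ℂ] H where
  toFun := J
  map_add' := hJ.1
  map_smul' := hJ.apply_smul

theorem IsConjugation.inner_apply_comm (hJ : IsConjugation J) (x y : H) :
    ⟪x, J y⟫_ℂ = ⟪y, J x⟫_ℂ := by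
  simpa only [hJ.apply_apply] using (hJ.inner_map_map (J y) x).symm

theorem IsConjugation.mapsTo_orthogonal (hJ : IsConjugation J) {K : Submodule ℂ H}
    (hK : MapsTo J K K) : MapsTo J Kᗮ Kᗮ := by
  intro y hy
  rw [SetLike.mem_coe, mem_orthogonal]
  intro u hu
  rw [hJ.inner_apply_comm, inner_eq_zero_symm]
  exact hy _ (hK hu)

theorem IsConjugation.exists_norm_eq_one_smul_fixed (hJ : IsConjugation J) {x : H} (hx : x ≠ 0)
    (hJx : J x ∈ ℂ ∙ x) : ∃ μ : ℂ, ‖μ‖ = 1 ∧ J (μ • x) = μ • x := by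
  obtain ⟨c, hc⟩ := mem_span_singleton.mp hJx
  have hc1 : conj c * c = 1 := by
    have hJJ := hJ.apply_apply x
    rw [← hc, hJ.apply_smul, ← hc, smul_smul] at hJJ
    exact smul_left_injective ℂ hx (hJJ.trans (one_smul ℂ x).symm)
  have hunit (z : ℂ) : conj z * z = 1 ↔ ‖z‖ = 1 := by
    rw [Complex.conj_mul']
    exact_mod_cast pow_eq_one_iff_of_nonneg (norm_nonneg z) two_ne_zero
  obtain ⟨μ, hμ⟩ := IsAlgClosed.exists_pow_nat_eq c two_pos
  have hμ1 : ‖μ‖ = 1 := (pow_eq_one_iff_of_nonneg (norm_nonneg μ) two_ne_zero).mp <| by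
    rw [← norm_pow, hμ, ← hunit, hc1]
  refine ⟨μ, hμ1, ?_⟩
  rw [hJ.apply_smul, ← hc, smul_smul, ← hμ, sq, ← mul_assoc, (hunit μ).mpr hμ1, one_mul]

theorem IsConjugation.exists_orthonormal_fixed {ι : Type*} (hJ : IsConjugation J) {f : ι → H}
    (hf : Orthonormal ℂ f) (hJf : ∀ i, J (f i) ∈ ℂ ∙ f i) :
    ∃ e : ι → H, Orthonormal ℂ e ∧ (∀ i, J (e i) = e i) ∧
      ∀ s, span ℂ (e '' s) = span ℂ (f '' s) := by
  choose μ hμ1 hμfix using fun i => hJ.exists_norm_eq_one_smul_fixed (hf.ne_zero i) (hJf i)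
  exact ⟨fun i => μ i • f i, hf.smul_of_norm_eq_one hμ1, hμfix,
    span_image_smul_of_ne_zero fun i => norm_ne_zero_iff.mp (by rw [hμ1]; exact one_ne_zero)⟩

theorem IsConjugation.apply_mem_span_singleton_of_mapsTo (hJ : IsConjugation J) {f : ℕ → H}
    (hf : Orthonormal ℂ f) (hmaps : ∀ n, MapsTo J (span ℂ (f '' Iio n)) (span ℂ (f '' Iio n)))
    (n : ℕ) : J (f n) ∈ ℂ ∙ f n := by
  rw [← hf.span_image_Iio_succ_inf_orthogonal n]
  exact ⟨hmaps (n + 1) (subset_span (mem_image_of_mem f (lt_add_one n))),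
    hJ.mapsTo_orthogonal (hmaps n) (hf.mem_orthogonal_span_image self_notMem_Iio)⟩

variable [CompleteSpace H] {A : H →L[ℂ] H}

theorem IsConjugation.apply_pow_apply (hJ : IsConjugation J)
    (hJAJ : ∀ x, J (A (J x)) = -adjoint A x) {x : H} (hx : J x = x) (k : ℕ) :
    J ((A ^ k) x) = (-1 : ℂ) ^ k • (adjoint A ^ k) x := by
  induction k with
  | zero => simpa using hx
  | succ k ih =>
    have hJA := hJAJ (J ((A ^ k) x))
    rw [hJ.apply_apply] at hJA
    rw [pow_succ', mul_apply_eq_comp, hJA, ih, map_smul, pow_succ', neg_one_mul, neg_smul,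
      pow_succ', mul_apply_eq_comp]

theorem IsConjugation.mapsTo_krylov (hJ : IsConjugation J)
    (hJAJ : ∀ x, J (A (J x)) = -adjoint A x) {x : H} (hx : J x = x)
    (hadj : ∀ n, (adjoint A ^ n) x ∈ krylov A x (n + 1)) (n : ℕ) :
    MapsTo J (krylov A x n) (krylov A x n) := by
  have hle : krylov A x n ≤ (krylov A x n).comap hJ.toLinearMap := by
    refine span_le.mpr ?_
    rintro _ ⟨k, hk, rfl⟩
    show J ((A ^ k) x) ∈ krylov A x n
    rw [hJ.apply_pow_apply hJAJ hx]
    exact krylov_mono A x hk (smul_mem _ _ (hadj k))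
  exact fun y hy => hle hy

theorem IsConjugation.inner_apply_eq_neg (hJ : IsConjugation J)
    (hJAJ : ∀ x, J (A (J x)) = -adjoint A x) {y z : H} (hy : J y = y) (hz : J z = z) :
    ⟪y, A z⟫_ℂ = -⟪z, A y⟫_ℂ :=
  calc ⟪y, A z⟫_ℂ = ⟪J (A (J z)), J y⟫_ℂ := by rw [hz, hJ.inner_map_map]
    _ = -⟪z, A y⟫_ℂ := by rw [hJAJ, hy, inner_neg_left, adjoint_inner_left]

end Conjugation

theorem gramDet_eq_det_gram {n : ℕ} (y : Fin n → H) : gramDet y = (Matrix.gram ℂ y).det := by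
  rw [gramDet, ← Matrix.det_transpose]
  rfl

theorem mem_span_of_gramDet_snoc_eq_zero {n : ℕ} {y : Fin n → H} {w : H}
    (hy : LinearIndependent ℂ y) (h : gramDet (Fin.snoc y w) = 0) : w ∈ span ℂ (range y) := by
  by_contra hw
  rw [gramDet_eq_det_gram] at h
  exact Matrix.det_gram_ne_zero_iff_linearIndependent.mpr (linearIndependent_finSnoc.mpr ⟨hy, hw⟩) h

theorem adjoint_pow_apply_mem_krylov [CompleteSpace H] (A : H →L[ℂ] H) (x : H)
    (hli : LinearIndependent ℂ fun k => (A ^ k) x) (hΓ : GammaVanish A x) (n : ℕ) :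
    (adjoint A ^ n) x ∈ krylov A x (n + 1) := by
  rcases n.eq_zero_or_pos with rfl | hn
  · simpa using pow_apply_mem_krylov A x zero_lt_one
  · have h := mem_span_of_gramDet_snoc_eq_zero (hli.comp Fin.val Fin.val_injective) (hΓ n hn)
    rwa [range_comp, Fin.range_val] at h

section KrylovBasis

variable {A : H →L[ℂ] H} {x : H} {e : ℕ → H}

theorem mem_krylov_succ_of_span_eq (hspan : ∀ n, span ℂ (e '' Iio n) = krylov A x n) (n : ℕ) :
    e n ∈ krylov A x (n + 1) :=
  hspan (n + 1) ▸ subset_span (mem_image_of_mem e (lt_add_one n))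

theorem mem_orthogonal_krylov_of_span_eq (he : Orthonormal ℂ e)
    (hspan : ∀ n, span ℂ (e '' Iio n) = krylov A x n) (n : ℕ) : e n ∈ (krylov A x n)ᗮ :=
  hspan n ▸ he.mem_orthogonal_span_image self_notMem_Iio

theorem inner_apply_eq_zero_of_add_one_lt (he : Orthonormal ℂ e)
    (hspan : ∀ n, span ℂ (e '' Iio n) = krylov A x n) {k l : ℕ} (h : l + 1 < k) :
    ⟪e k, A (e l)⟫_ℂ = 0 :=
  inner_left_of_mem_orthogonal
    (krylov_mono A x h (apply_mem_krylov_succ A x (mem_krylov_succ_of_span_eq hspan l)))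
    (mem_orthogonal_krylov_of_span_eq he hspan k)

theorem inner_pow_apply_ne_zero (he : Orthonormal ℂ e)
    (hspan : ∀ n, span ℂ (e '' Iio n) = krylov A x n) (n : ℕ) : ⟪e n, (A ^ n) x⟫_ℂ ≠ 0 := by
  intro h
  have hperp : krylov A x (n + 1) ≤ (ℂ ∙ e n)ᗮ := by
    refine span_le.mpr ?_
    rintro _ ⟨k, hk, rfl⟩
    rw [SetLike.mem_coe, mem_orthogonal_singleton_iff_inner_right]
    rcases (Nat.lt_succ_iff.mp hk).lt_or_eq with hk | rfl
    · exact inner_left_of_mem_orthogonal (pow_apply_mem_krylov A x hk)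
        (mem_orthogonal_krylov_of_span_eq he hspan n)
    · exact h
  have hself := hperp (mem_krylov_succ_of_span_eq hspan n)
  rw [mem_orthogonal_singleton_iff_inner_right, inner_self_eq_zero] at hself
  exact he.ne_zero n hself

theorem inner_succ_apply_ne_zero (he : Orthonormal ℂ e)
    (hspan : ∀ n, span ℂ (e '' Iio n) = krylov A x n) (k : ℕ) :
    ⟪e (k + 1), A (e k)⟫_ℂ ≠ 0 := by
  intro h
  have hker : krylov A x (k + 1) ≤ (ℂ ∙ e (k + 1))ᗮ.comap (A : H →ₗ[ℂ] H) := by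
    rw [← hspan, span_le]
    rintro _ ⟨j, hj, rfl⟩
    rw [SetLike.mem_coe, mem_comap, mem_orthogonal_singleton_iff_inner_right]
    rcases (Nat.lt_succ_iff.mp hj).lt_or_eq with hj | rfl
    · exact inner_apply_eq_zero_of_add_one_lt he hspan (by omega)
    · exact h
  apply inner_pow_apply_ne_zero he hspan (k + 1)
  rw [← mem_orthogonal_singleton_iff_inner_right, pow_succ', mul_apply_eq_comp]
  exact hker (pow_apply_mem_krylov A x (lt_add_one k))

theorem top_le_topologicalClosure_span_of_span_eq_krylov (hcyc : IsCyclicVector A x)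
    (hspan : ∀ n, span ℂ (e '' Iio n) = krylov A x n) :
    ⊤ ≤ (span ℂ (range e)).topologicalClosure := by
  have hle : span ℂ (range fun k => (A ^ k) x) ≤ span ℂ (range e) :=
    span_le.mpr <| range_subset_iff.mpr fun k =>
      span_mono (image_subset_range e _) (hspan (k + 1) ▸ pow_apply_mem_krylov A x (lt_add_one k))
  exact fun y _ => topologicalClosure_mono hle (hcyc y)

end KrylovBasis

theorem memM3minus_of_antisymm {m : ℕ → ℕ → ℂ} (hanti : ∀ k l, m k l = -m l k)
    (hzero : ∀ k l, l + 1 < k → m k l = 0) (hsub : ∀ k, m (k + 1) k ≠ 0) : MemM3minus m := by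
  refine ⟨fun k l hkl => ?_, hanti, fun k => by rw [hanti]; exact neg_ne_zero.mpr (hsub k)⟩
  rcases lt_abs.mp hkl with h | h
  · exact hzero k l (by omega)
  · rw [hanti, hzero l k (by omega), neg_zero]

theorem statement3_general {H : Type*} [NormedAddCommGroup H] [InnerProductSpace ℂ H]
    [CompleteSpace H]
    (hinf : ¬ FiniteDimensional ℂ H)
    (A : H →L[ℂ] H) (J : H → H) (x₀ : H)
    (hJ : IsConjugation J)
    (hJAJ : ∀ x : H, J (A (J x)) = - ContinuousLinearMap.adjoint A x)
    (hcyc : IsCyclicVector A x₀) (hJx₀ : J x₀ = x₀)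
    (hΓ : GammaVanish A x₀) :
    MemCminus A := by
  have hli := linearIndependent_pow_apply A x₀ hinf hcyc
  have hmaps := hJ.mapsTo_krylov hJAJ hJx₀ (adjoint_pow_apply_mem_krylov A x₀ hli hΓ)
  have hf := gramSchmidtNormed_orthonormal hli
  have hspan_f (n : ℕ) : span ℂ (gramSchmidtNormed ℂ (fun k => (A ^ k) x₀) '' Iio n) =
      krylov A x₀ n := by
    rw [span_gramSchmidtNormed, span_gramSchmidt_Iio]
    rfl
  obtain ⟨e, he, hJe, hspan_e⟩ := hJ.exists_orthonormal_fixed hf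
    (hJ.apply_mem_span_singleton_of_mapsTo hf fun n => hspan_f n ▸ hmaps n)
  have hspan (n : ℕ) : span ℂ (e '' Iio n) = krylov A x₀ n := (hspan_e _).trans (hspan_f n)
  refine ⟨HilbertBasis.mk he (top_le_topologicalClosure_span_of_span_eq_krylov hcyc hspan), ?_⟩
  unfold matrixIn
  rw [HilbertBasis.coe_mk]
  exact memM3minus_of_antisymm (fun k l => hJ.inner_apply_eq_neg hJAJ (hJe k) (hJe l))
    (fun _ _ => inner_apply_eq_zero_of_add_one_lt he hspan) (inner_succ_apply_ne_zero he hspan)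

/-- If there are a conjugation `J` with `JAJ = −A*` and a cyclic vector `x₀`
with `Jx₀ = x₀` such that `Γ(x₀, Ax₀, …, Aⁿx₀, (A*)ⁿx₀) = 0` for all `n ≥ 1`,
then `A ∈ C₋(H)`. -/
theorem statement3 {H : Type*} [NormedAddCommGroup H] [InnerProductSpace ℂ H]
    [CompleteSpace H] [TopologicalSpace.SeparableSpace H]
    (hinf : ¬ FiniteDimensional ℂ H)
    (A : H →L[ℂ] H) (J : H → H) (x₀ : H)
    (hJ : IsConjugation J)
    (hJAJ : ∀ x : H, J (A (J x)) = - ContinuousLinearMap.adjoint A x)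
    (hcyc : IsCyclicVector A x₀) (hJx₀ : J x₀ = x₀)
    (hΓ : GammaVanish A x₀) :
    MemCminus A :=
  statement3_general hinf A J x₀ hJ hJAJ hcyc hJx₀ hΓ
end
end

section
/- Let A be a bounded linear operator on a complex Hilbert space H with a cyclic vector x₀, and let J be a conjugation on H such that J(Σ_k α_k Aᵏx₀) = Σ_k (−1)ᵏ conj(α_k) (A*)ᵏx₀ for every finite linear combination Σ_k α_k Aᵏx₀ (α_k ∈ ℂ, all but finitely many zero). Then JA = −A*J, i.e. JAJ = −A*, and Jx₀ = x₀; in particular A is complex skew-symmetric. -/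
open scoped ComplexConjugate

noncomputable section

variable {H : Type*} [NormedAddCommGroup H] [InnerProductSpace ℂ H]

/-! A conjugation preserves norms, so `J A` and `-A* J` are continuous conjugate-linear maps. The hypothesis, applied to a single term, gives
`J (Aᵏx₀) = (-1)ᵏ (A*)ᵏx₀`; both maps therefore send `Aᵏx₀` to `(-1)ᵏ⁺¹ (A*)ᵏ⁺¹x₀`, and
agreeing on the orbit of the cyclic vector they agree on its dense span, hence everywhere. -/

namespace IsConjugation

variable {J : H → H}

theorem norm_apply (hJ : IsConjugation J) (x : H) : ‖J x‖ = ‖x‖ := by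
  rw [norm_eq_sqrt_re_inner (𝕜 := ℂ), hJ.2.2.2, ← norm_eq_sqrt_re_inner]

def toLinearIsometry (hJ : IsConjugation J) : H →ₗᵢ⋆[ℂ] H where
  toFun := J
  map_add' := hJ.1
  map_smul' := hJ.2.1
  norm_map' := hJ.norm_apply

@[simp]
theorem coe_toLinearIsometry (hJ : IsConjugation J) : ⇑hJ.toLinearIsometry = J := rfl

theorem anticommute_of_apply_pow (hJ : IsConjugation J) {A B : H →L[ℂ] H} {x₀ : H}
    (hcyc : IsCyclicVector A x₀) (horbit : ∀ k : ℕ, J ((A ^ k) x₀) = (-1 : ℂ) ^ k • (B ^ k) x₀)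
    (x : H) : J (A x) = -B (J x) := by
  let J' := hJ.toLinearIsometry.toContinuousLinearMap
  suffices J'.comp A = -(B.comp J') from congr($this x)
  refine ContinuousLinearMap.ext_on hcyc ?_
  rintro _ ⟨k, rfl⟩
  simp only [ContinuousLinearMap.coe_comp, Function.comp_apply, neg_apply,
    LinearIsometry.coe_toContinuousLinearMap, coe_toLinearIsometry, J', ← mul_apply_eq_comp,
    ← pow_succ', horbit, map_smul, pow_succ (-1 : ℂ), mul_neg_one, neg_smul]

end IsConjugation

/-- If `J` is a conjugation satisfying
`J(Σ α_k Aᵏx₀) = Σ (−1)ᵏ conj(α_k) (A*)ᵏx₀` on finite linear combinations from the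
orbit of a cyclic vector `x₀`, then `JA = −A*J`, `JAJ = −A*`, `Jx₀ = x₀`, and in
particular `A` is complex skew-symmetric. -/
theorem statement5 {H : Type*} [NormedAddCommGroup H] [InnerProductSpace ℂ H]
    [CompleteSpace H]
    (A : H →L[ℂ] H) (x₀ : H) (hcyc : IsCyclicVector A x₀)
    (J : H → H) (hJ : IsConjugation J)
    (hL : ∀ α : ℕ →₀ ℂ,
      J (α.sum fun k c => c • (A ^ k) x₀) =
        α.sum fun k c => ((-1 : ℂ) ^ k * conj c) • (ContinuousLinearMap.adjoint A ^ k) x₀) :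
    (∀ x : H, J (A x) = - ContinuousLinearMap.adjoint A (J x)) ∧
    (∀ x : H, J (A (J x)) = - ContinuousLinearMap.adjoint A x) ∧
    J x₀ = x₀ ∧
    (∃ J' : H → H, IsConjugation J' ∧
      ∀ x : H, J' (A (J' x)) = - ContinuousLinearMap.adjoint A x) := by
  have horbit (k : ℕ) :
      J ((A ^ k) x₀) = (-1 : ℂ) ^ k • (ContinuousLinearMap.adjoint A ^ k) x₀ := by
    simpa using hL (Finsupp.single k 1)
  have hcomm := hJ.anticommute_of_apply_pow hcyc horbit
  have hskew (x : H) : J (A (J x)) = -ContinuousLinearMap.adjoint A x := by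
    rw [hcomm, hJ.2.2.1]
  exact ⟨hcomm, hskew, by simpa using horbit 0, J, hJ, hskew⟩
end
end
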